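/- For nonnegative integers k_p, k_s and erasure probabilities 0 ≤ p₂, p₂₁, p₁₂ < 1, the conditional expected retransmission count of the SNC scheme, E[B₃^S | L_p=k_p, L_s=k_s], is at most k_p/(1-p₂₁) + k_s/(1-p₂). -/

import Mathlib

/-!
Conditioned on `i` successes of the first link and `j` of the second, coding saves exactly
`min i j / (1 - p₂ p₂₁)` over sending every packet separately, so each cost in the average is at
most the conventional cost; the weights form a product of two binomial distributions and
average it to that bound.
-/

open Finset

lemma sum_range_choose_mul_one_sub_pow_mul_pow {R : Type*} [CommRing R] (n : ℕ) (p : R) :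
    ∑ i ∈ range (n + 1), (n.choose i : R) * (1 - p) ^ i * p ^ (n - i) = 1 := by
  have h := (add_pow (1 - p) p n).symm
  rw [sub_add_cancel, one_pow] at h
  exact (sum_congr rfl fun i _ => by ring).trans h

lemma choose_mul_one_sub_pow_mul_pow_nonneg {R : Type*} [CommRing R] [PartialOrder R]
    [IsOrderedRing R] {p : R} (n i : ℕ) (hp₀ : 0 ≤ p) (hp₁ : 0 ≤ 1 - p) :
    0 ≤ (n.choose i : R) * (1 - p) ^ i * p ^ (n - i) := by
  positivity

section WeightedAverage

variable {R ι κ : Type*} [CommSemiring R] [PartialOrder R] [IsOrderedRing R]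

lemma sum_mul_le_of_sum_eq_one {s : Finset ι} {w f : ι → R} {C : R}
    (hw : ∀ i ∈ s, 0 ≤ w i) (hw₁ : ∑ i ∈ s, w i = 1) (hf : ∀ i ∈ s, f i ≤ C) :
    ∑ i ∈ s, w i * f i ≤ C :=
  calc ∑ i ∈ s, w i * f i ≤ ∑ i ∈ s, w i * C :=
        sum_le_sum fun i hi => mul_le_mul_of_nonneg_left (hf i hi) (hw i hi)
    _ = C := by rw [← sum_mul, hw₁, one_mul]

lemma sum_sum_mul_mul_le_of_sum_eq_one {s : Finset ι} {t : Finset κ} {a : ι → R} {b : κ → R}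
    {f : ι → κ → R} {C : R} (ha : ∀ i ∈ s, 0 ≤ a i) (ha₁ : ∑ i ∈ s, a i = 1)
    (hb : ∀ j ∈ t, 0 ≤ b j) (hb₁ : ∑ j ∈ t, b j = 1) (hf : ∀ i ∈ s, ∀ j ∈ t, f i j ≤ C) :
    ∑ i ∈ s, ∑ j ∈ t, a i * b j * f i j ≤ C := by
  simp_rw [mul_assoc, ← mul_sum]
  exact sum_mul_le_of_sum_eq_one ha ha₁ fun i hi => sum_mul_le_of_sum_eq_one hb hb₁ (hf i hi)

end WeightedAverage

lemma snc_cost_le_arq_cost (m kp ks x y z : ℝ) (hm : 0 ≤ m) (hz : 0 ≤ z) :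
    m * (1 / x + 1 / y - 1 / z) + (kp - m) / x + (ks - m) / y ≤ kp / x + ks / y := by
  have saving : m * (1 / x + 1 / y - 1 / z) + (kp - m) / x + (ks - m) / y
      = kp / x + ks / y - m / z := by ring
  rw [saving]
  linarith [div_nonneg hm hz]

theorem snc_conditional_expectation_upper_bound_general (kp ks : ℕ) (p₂ p₂₁ p₁₂ : ℝ)
    (h₂1 : p₂ < 1) (h₂₁0 : 0 ≤ p₂₁) (h₂₁1 : p₂₁ < 1)
    (h₁₂0 : 0 ≤ p₁₂) (h₁₂1 : p₁₂ < 1) :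
    ∑ i ∈ Finset.range (kp + 1), ∑ j ∈ Finset.range (ks + 1),
        (kp.choose i : ℝ) * (1 - p₁₂) ^ i * p₁₂ ^ (kp - i)
          * ((ks.choose j : ℝ) * (1 - p₂₁) ^ j * p₂₁ ^ (ks - j))
          * ((min i j : ℝ) * (1 / (1 - p₂₁) + 1 / (1 - p₂) - 1 / (1 - p₂ * p₂₁))
              + ((kp : ℝ) - min i j) / (1 - p₂₁) + ((ks : ℝ) - min i j) / (1 - p₂))
    ≤ (kp : ℝ) / (1 - p₂₁) + (ks : ℝ) / (1 - p₂) := by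
  have hq : 0 ≤ 1 - p₂ * p₂₁ := by nlinarith
  refine sum_sum_mul_mul_le_of_sum_eq_one
    (fun i _ => choose_mul_one_sub_pow_mul_pow_nonneg kp i h₁₂0 (by linarith))
    (sum_range_choose_mul_one_sub_pow_mul_pow kp p₁₂)
    (fun j _ => choose_mul_one_sub_pow_mul_pow_nonneg ks j h₂₁0 (by linarith))
    (sum_range_choose_mul_one_sub_pow_mul_pow ks p₂₁) fun i _ j _ => ?_
  rw [Nat.cast_min]
  exact snc_cost_le_arq_cost _ _ _ _ _ _ (le_min i.cast_nonneg j.cast_nonneg) hq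

/-- The conditional expected retransmission count of the SNC scheme is at most
the conventional-ARQ cost `k_p/(1-p₂₁) + k_s/(1-p₂)`. -/
theorem snc_conditional_expectation_upper_bound (kp ks : ℕ) (p₂ p₂₁ p₁₂ : ℝ)
    (h₂0 : 0 ≤ p₂) (h₂1 : p₂ < 1) (h₂₁0 : 0 ≤ p₂₁) (h₂₁1 : p₂₁ < 1)
    (h₁₂0 : 0 ≤ p₁₂) (h₁₂1 : p₁₂ < 1) :
    ∑ i ∈ Finset.range (kp + 1), ∑ j ∈ Finset.range (ks + 1),
        (kp.choose i : ℝ) * (1 - p₁₂) ^ i * p₁₂ ^ (kp - i)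
          * ((ks.choose j : ℝ) * (1 - p₂₁) ^ j * p₂₁ ^ (ks - j))
          * ((min i j : ℝ) * (1 / (1 - p₂₁) + 1 / (1 - p₂) - 1 / (1 - p₂ * p₂₁))
              + ((kp : ℝ) - min i j) / (1 - p₂₁) + ((ks : ℝ) - min i j) / (1 - p₂))
    ≤ (kp : ℝ) / (1 - p₂₁) + (ks : ℝ) / (1 - p₂) :=
  snc_conditional_expectation_upper_bound_general kp ks p₂ p₂₁ p₁₂ h₂1 h₂₁0 h₂₁1 h₁₂0 h₁₂1
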